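/- Let u, m : ℝ⁴ → ℝ be smooth functions of (x, y, z, t) with t ≠ 0 on the domain, satisfying the covering equations m_t = u_z m_x − (z/t) m_z and m_y = u_x m_x − (z/t) m_x. Then m_x · (u_{yz} − u_{tx} + u_z u_{xx} − u_x u_{xz}) = 0; in particular, wherever m_x ≠ 0, the function u satisfies the reduced quasi-classical self-dual Yang-Mills equation u_{yz} = u_{tx} − u_z u_{xx} + u_x u_{xz}. -/

import Mathlib

/-- Directional (partial) derivative of a function of `(x, y, z, t) ∈ ℝ⁴`. -/
noncomputable def pd (v : ℝ × ℝ × ℝ × ℝ) (f : ℝ × ℝ × ℝ × ℝ → ℝ) : ℝ × ℝ × ℝ × ℝ → ℝ :=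
  fun p => fderiv ℝ f p v

/-- Unit direction of `x`. -/
def ex : ℝ × ℝ × ℝ × ℝ := (1, 0, 0, 0)
/-- Unit direction of `y`. -/
def ey : ℝ × ℝ × ℝ × ℝ := (0, 1, 0, 0)
/-- Unit direction of `z`. -/
def ez : ℝ × ℝ × ℝ × ℝ := (0, 0, 1, 0)
/-- Unit direction of `t`. -/
def et : ℝ × ℝ × ℝ × ℝ := (0, 0, 0, 1)

/-- The left-hand side of the rYME `u_{yz} - u_{tx} + u_z u_{xx} - u_x u_{xz} = 0`. -/
noncomputable def ryme (u : ℝ × ℝ × ℝ × ℝ → ℝ) : ℝ × ℝ × ℝ × ℝ → ℝ :=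
  fun p => pd ey (pd ez u) p - pd et (pd ex u) p
    + pd ez u p * pd ex (pd ex u) p - pd ex u p * pd ex (pd ez u) p

/-!
On `t ≠ 0` the covering equations express `m_t` and `m_y` through `u`, `m` and `c = z/t`, so
`∂_y m_t = ∂_t m_y` can be expanded by the product rule, and the second derivatives `m_{xy}`,
`m_{zy}`, `m_{xt}` eliminated by differentiating the covering equations once more. For any
coefficient `c` with `c_x = c_y = 0` what remains is `m_x (rYME + c_t + c c_z) = 0`, and
`c = z/t` solves the inviscid Burgers equation `c_t + c c_z = 0`.
-/

open Filter Topology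

section PartialDerivatives

variable {f : ℝ × ℝ × ℝ × ℝ → ℝ} {p : ℝ × ℝ × ℝ × ℝ}

lemma differentiable_pd (hf : ContDiff ℝ 2 f) (v : ℝ × ℝ × ℝ × ℝ) :
    Differentiable ℝ (pd v f) :=
  ((ContinuousLinearMap.apply ℝ ℝ v).contDiff.comp
    (hf.fderiv_right (m := 1) le_rfl)).differentiable one_ne_zero

lemma pd_pd_eq_fderiv_fderiv (hf : ContDiff ℝ 2 f) (v w : ℝ × ℝ × ℝ × ℝ) :
    pd v (pd w f) p = fderiv ℝ (fderiv ℝ f) p v w := by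
  have h : DifferentiableAt ℝ (fderiv ℝ f) p :=
    (hf.fderiv_right (m := 1) le_rfl).differentiable one_ne_zero p
  change fderiv ℝ (fun q => fderiv ℝ f q w) p v = _
  simp [fderiv_clm_apply h (differentiableAt_const w)]

lemma pd_comm (hf : ContDiff ℝ 2 f) (v w : ℝ × ℝ × ℝ × ℝ) :
    pd v (pd w f) p = pd w (pd v f) p := by
  rw [pd_pd_eq_fderiv_fderiv hf, pd_pd_eq_fderiv_fderiv hf]
  exact hf.contDiffAt.isSymmSndFDerivAt (by simp [minSmoothness_of_isRCLikeNormedField]) v w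

lemma pd_pd_eq_of_eventuallyEq_mul_sub {A B C D : ℝ × ℝ × ℝ × ℝ → ℝ} (v w : ℝ × ℝ × ℝ × ℝ)
    (h : pd v f =ᶠ[𝓝 p] fun q => A q * B q - C q * D q)
    (hA : DifferentiableAt ℝ A p) (hB : DifferentiableAt ℝ B p)
    (hC : DifferentiableAt ℝ C p) (hD : DifferentiableAt ℝ D p) :
    pd w (pd v f) p
      = pd w A p * B p + A p * pd w B p - (pd w C p * D p + C p * pd w D p) := by
  rw [pd, h.fderiv_eq, fderiv_fun_sub (hA.fun_mul hB) (hC.fun_mul hD), fderiv_fun_mul hA hB,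
    fderiv_fun_mul hC hD]
  simp only [pd, sub_apply, add_apply, smul_apply, smul_eq_mul]
  ring

lemma pd_z_div_t (v : ℝ × ℝ × ℝ × ℝ) (ht : p.2.2.2 ≠ 0) :
    pd v (fun q => q.2.2.1 / q.2.2.2) p
      = (v.2.2.1 * p.2.2.2 - p.2.2.1 * v.2.2.2) / p.2.2.2 ^ 2 := by
  have hdiff : DifferentiableAt ℝ (fun q : ℝ × ℝ × ℝ × ℝ => q.2.2.1 / q.2.2.2) p := by
    fun_prop (disch := assumption)
  have hline : HasDerivAt (fun s : ℝ => (p.2.2.1 + s * v.2.2.1) / (p.2.2.2 + s * v.2.2.2))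
      ((v.2.2.1 * p.2.2.2 - p.2.2.1 * v.2.2.2) / p.2.2.2 ^ 2) 0 := by
    simpa using ((hasDerivAt_id' (0 : ℝ)).mul_const v.2.2.1 |>.const_add p.2.2.1).fun_div
      ((hasDerivAt_id' (0 : ℝ)).mul_const v.2.2.2 |>.const_add p.2.2.2) (by simpa using ht)
  rw [pd, ← hdiff.lineDeriv_eq_fderiv, lineDeriv]
  simpa using hline.deriv

end PartialDerivatives

section Covering

variable {u m c : ℝ × ℝ × ℝ × ℝ → ℝ} {p : ℝ × ℝ × ℝ × ℝ}

lemma pd_ex_mul_ryme_add_burgers_eq_zero (hu : ContDiff ℝ 2 u) (hm : ContDiff ℝ 2 m)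
    (hc : DifferentiableAt ℝ c p) (hcx : pd ex c p = 0) (hcy : pd ey c p = 0)
    (hmt : pd et m =ᶠ[𝓝 p] fun q => pd ez u q * pd ex m q - c q * pd ez m q)
    (hmy : pd ey m =ᶠ[𝓝 p] fun q => pd ex u q * pd ex m q - c q * pd ex m q) :
    pd ex m p * (ryme u p + (pd et c p + c p * pd ez c p)) = 0 := by
  have dux := differentiable_pd hu ex p
  have duz := differentiable_pd hu ez p
  have dmx := differentiable_pd hm ex p
  have dmz := differentiable_pd hm ez p
  have m_xy := pd_pd_eq_of_eventuallyEq_mul_sub ey ex hmy dux dmx hc dmx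
  have m_zy := pd_pd_eq_of_eventuallyEq_mul_sub ey ez hmy dux dmx hc dmx
  have m_xt := pd_pd_eq_of_eventuallyEq_mul_sub et ex hmt duz dmx hc dmz
  have m_ty := pd_pd_eq_of_eventuallyEq_mul_sub et ey hmt duz dmx hc dmz
  have m_yt := pd_pd_eq_of_eventuallyEq_mul_sub ey et hmy dux dmx hc dmx
  rw [hcx] at m_xy m_xt
  rw [pd_comm hu ez ex] at m_zy
  rw [pd_comm hm ex ez] at m_xt
  rw [hcy, pd_comm hm ey ex, pd_comm hm ey ez, m_xy, m_zy] at m_ty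
  rw [pd_comm hm et ex, m_xt] at m_yt
  rw [ryme]
  linear_combination m_yt - m_ty + pd_comm hm ey et

end Covering

/-- Compatibility of the level-zero `m`-covering: where `t ≠ 0`, if
`m_t = u_z m_x - (z/t) m_z` and `m_y = u_x m_x - (z/t) m_x`, then
`m_x · (u_{yz} - u_{tx} + u_z u_{xx} - u_x u_{xz}) = 0`; wherever moreover
`m_x ≠ 0`, `u` satisfies the rYME. -/
theorem m_covering_compatibility (u m : ℝ × ℝ × ℝ × ℝ → ℝ)
    (hu : ContDiff ℝ (⊤ : ℕ∞) u) (hm : ContDiff ℝ (⊤ : ℕ∞) m)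
    (h1 : ∀ p : ℝ × ℝ × ℝ × ℝ, p.2.2.2 ≠ 0 →
      pd et m p = pd ez u p * pd ex m p - (p.2.2.1 / p.2.2.2) * pd ez m p)
    (h2 : ∀ p : ℝ × ℝ × ℝ × ℝ, p.2.2.2 ≠ 0 →
      pd ey m p = pd ex u p * pd ex m p - (p.2.2.1 / p.2.2.2) * pd ex m p) :
    ∀ p : ℝ × ℝ × ℝ × ℝ, p.2.2.2 ≠ 0 →
      pd ex m p * ryme u p = 0 ∧ (pd ex m p ≠ 0 → ryme u p = 0) := by
  intro p ht
  set c : ℝ × ℝ × ℝ × ℝ → ℝ := fun q => q.2.2.1 / q.2.2.2 with hc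
  have hnear : ∀ᶠ q in 𝓝 p, q.2.2.2 ≠ 0 :=
    (continuous_snd.comp (continuous_snd.comp continuous_snd)).continuousAt.eventually_ne ht
  have key := pd_ex_mul_ryme_add_burgers_eq_zero (c := c)
    (hu.of_le (WithTop.coe_le_coe.mpr le_top)) (hm.of_le (WithTop.coe_le_coe.mpr le_top))
    (by fun_prop (disch := assumption)) (by simp [hc, pd_z_div_t _ ht, ex])
    (by simp [hc, pd_z_div_t _ ht, ey]) (hnear.mono h1) (hnear.mono h2)
  have burgers : pd et c p + c p * pd ez c p = 0 := by
    simp only [hc, pd_z_div_t _ ht, et, ez]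
    field_simp
    ring
  rw [burgers, add_zero] at key
  exact ⟨key, fun hmx => (mul_eq_zero.1 key).resolve_left hmx⟩
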